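/- arXiv:1504.07504 — 2 statements merged into one kernel-verified Lean document; each statement's English description precedes it below -/
import Mathlib

section
/- Edge contraction preserves reachability: if in a finite directed labeled graph an edge (ν, μ) is contracted by redirecting all edges incident to μ onto ν and deleting μ, then any node reachable from the start node before the contraction (other than μ itself) remains reachable after the contraction (with μ's reachability inherited by ν). -/
theorem Relation.ReflTransGen.map_of_collapse_edge {α β : Type*} {E : Set (α × α)} {e : α × α}
    {x y : α} (hxy : ReflTransGen (fun a b => (a, b) ∈ E) x y) (f : α → β)
    (he : f e.1 = f e.2) :
    ReflTransGen (fun a b => (a, b) ∈ (fun p : α × α => (f p.1, f p.2)) '' (E \ {e}))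
      (f x) (f y) := by
  refine hxy.lift' f fun a b hab => ?_
  by_cases hdrop : (a, b) = e
  · subst hdrop
    change ReflTransGen _ (f a) (f b)
    rw [show f a = f b from he]
  · exact ReflTransGen.single ⟨(a, b), ⟨hab, hdrop⟩, rfl⟩

theorem contraction_preserves_reachability_general {V : Type*} [DecidableEq V]
    (E : Set (V × V)) (start ν μ : V)
    (subst : V → V) (hsubst : subst = fun z => if z = μ then ν else z)
    (E' : Set (V × V))
    (hE' : E' = (fun p : V × V => (subst p.1, subst p.2)) '' (E \ {(ν, μ)}))
    (start' : V) (hstart' : start' = subst start) :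
    ∀ x : V, Relation.ReflTransGen (fun a b => (a, b) ∈ E) start x →
      Relation.ReflTransGen (fun a b => (a, b) ∈ E') start' (subst x) := by
  intro x hx
  have hcollapse : subst ν = subst μ := by simp [hsubst]
  subst hE' hstart'
  exact hx.map_of_collapse_edge (e := (ν, μ)) subst hcollapse

/-- Contraction of the edge `(ν, μ)` in a directed graph: remove the edge,
redirect every edge incident to `μ` onto `ν`, and delete `μ`; the
substitution `subst` sends `μ` to `ν` and fixes all other nodes.
Any node reachable from the start node before contraction remains reachable
after contraction (with `μ`'s reachability inherited by `ν`, and `ν`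
becoming the start node if `μ` was). -/
theorem contraction_preserves_reachability {V : Type*} [DecidableEq V]
    (E : Set (V × V)) (start ν μ : V) (hedge : (ν, μ) ∈ E)
    (subst : V → V) (hsubst : subst = fun z => if z = μ then ν else z)
    (E' : Set (V × V))
    (hE' : E' = (fun p : V × V => (subst p.1, subst p.2)) '' (E \ {(ν, μ)}))
    (start' : V) (hstart' : start' = subst start) :
    ∀ x : V, Relation.ReflTransGen (fun a b => (a, b) ∈ E) start x →
      Relation.ReflTransGen (fun a b => (a, b) ∈ E') start' (subst x) :=
  contraction_preserves_reachability_general E start ν μ subst hsubst E' hE' start' hstart'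
end

section
/- The restriction of an LTS to a channel sub-alphabet is a trace abstraction: every trace of the original LTS, projected onto the actions of channels j..j+h, is a trace of the restricted LTS obtained by contracting all edges labeled with actions on other channels. -/
/-- A labeled transition system whose actions carry channel identifiers
via `ch`. -/
structure LTS (S A : Type*) where
  tr : S → A → S → Prop
  init : S

/-- `Run L s w`: the finite action sequence `w` labels a path of `L` from `s`. -/
inductive Run {S A : Type*} (L : LTS S A) : S → List A → Prop
  | nil (s : S) : Run L s []
  | cons {s a s' w} : L.tr s a s' → Run L s' w → Run L s (a :: w)

/-- The finite-trace language of an LTS. -/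
def traces {S A : Type*} (L : LTS S A) : Set (List A) := {w | Run L L.init w}

/-- States connected by a (possibly empty) sequence of edges labeled with
actions on channels outside `Γ` — the states identified by contracting all
such edges. -/
def BadReach {S A : Type*} (ch : A → ℕ) (Γ : Set ℕ) (L : LTS S A)
    (s t : S) : Prop :=
  Relation.ReflTransGen (fun x y => ∃ a, L.tr x a y ∧ ch a ∉ Γ) s t

/-- The restriction `L_Γ` of `L` to the channels in `Γ`: edges labeled with
actions on other channels are contracted (their endpoints identified and
loops on such labels removed), so a `Γ`-labeled transition is available from
`s` whenever it is available from some state contraction-identified with `s`. -/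
def restrictLTS {S A : Type*} (ch : A → ℕ) (Γ : Set ℕ) (L : LTS S A) :
    LTS S A where
  tr s a t := ch a ∈ Γ ∧ ∃ u, BadReach ch Γ L s u ∧ L.tr u a t
  init := L.init

/-- The start may be anywhere in the `BadReach`-class of `s`: this is the invariant of the
induction, since an erased step stays inside the class and a kept step leaves from it. -/
theorem Run.filter_restrictLTS {S A : Type*} {ch : A → ℕ} {Γ : Set ℕ} [DecidablePred (· ∈ Γ)]
    {L : LTS S A} {s : S} {w : List A} (h : Run L s w) {s₀ : S} (hs₀ : BadReach ch Γ L s₀ s) :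
    Run (restrictLTS ch Γ L) s₀ (w.filter fun a => decide (ch a ∈ Γ)) := by
  induction h generalizing s₀ with
  | nil => exact Run.nil s₀
  | @cons s a s' w htr _ ih =>
    by_cases ha : ch a ∈ Γ
    · rw [List.filter_cons_of_pos (by simpa using ha)]
      exact Run.cons ⟨ha, s, hs₀, htr⟩ (ih Relation.ReflTransGen.refl)
    · rw [List.filter_cons_of_neg (by simpa using ha)]
      exact ih (hs₀.tail ⟨a, htr, ha⟩)

/-- Channel restriction is a trace abstraction: the projection (erasing
actions on channels outside `Γ = {j,…,j+h}`) of every trace of `L` is a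
trace of the restricted LTS `L_Γ`. -/
theorem restriction_is_trace_abstraction {S A : Type*}
    (ch : A → ℕ) (Γ : Set ℕ) [DecidablePred (· ∈ Γ)] (L : LTS S A) :
    (fun w : List A => w.filter (fun a => decide (ch a ∈ Γ))) '' traces L ⊆
      traces (restrictLTS ch Γ L) := by
  rintro _ ⟨w, hw, rfl⟩
  exact Run.filter_restrictLTS hw Relation.ReflTransGen.refl
end
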